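/- Let E ⊆ ∂T be closed and for y ∈ T write c(y) = cap^{T_y}(E ∩ ∂T_y). Then for every x ∈ T the recursive relation c(x) = (c(x₊) + c(x₋)) / (1 + c(x₊) + c(x₋)) holds, where x₊ and x₋ are the two children of x. -/

import Mathlib

/-! Write `t = φ(x)` for the value of a test function at the root `x`. The restriction of
`φ / (1 - t)` to either child subtree is admissible there; conversely, admissible functions on the
two child subtrees, scaled by `1 - t` and completed by the value `t` at `x`, give an admissible
function at `x`. Since the energy splits over the root and the two subtrees, this shows
`c(x) = inf_t (t² + (1 - t)² s)` with `s = c(x₊) + c(x₋)`, and the quadratic in `t` is minimal at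
`t = s / (1 + s)`, with value `s / (1 + s)`. -/

open scoped ENNReal NNReal
open Filter Topology

noncomputable section

/-- The vertex set of the dyadic tree `T`: finite binary strings. The boundary `∂T`
is the set of infinite binary sequences `ℕ → Bool`. `pre ζ k` is the prefix of
length `k` of the boundary point `ζ`. -/
def pre (ζ : ℕ → Bool) (k : ℕ) : List Bool := List.ofFn (fun i : Fin k => ζ i)

/-- The tree condenser capacity `cap^T_n(E)`: the infimum of `Σ_x φ(x)²` over
`φ : T → [0,∞)` with `Iφ(ζ) = Σ_{x ∈ P(ζ)} φ(x) ≥ 1` on `E` and `φ(x) = 0`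
whenever `d(x) ≤ n-1`.  For `n = 0` this is the tree capacity `cap^T(E)`. -/
noncomputable def treeCapN (n : ℕ) (E : Set (ℕ → Bool)) : ℝ≥0∞ :=
  sInf { c | ∃ φ : List Bool → ℝ≥0,
    (∀ ζ ∈ E, 1 ≤ ∑' k : ℕ, (φ (pre ζ k) : ℝ≥0∞)) ∧
    (∀ x : List Bool, x.length < n → φ x = 0) ∧
    c = ∑' x : List Bool, (φ x : ℝ≥0∞) ^ 2 }

/-- The tree capacity `cap^T(E)` of a set `E ⊆ ∂T`. -/
noncomputable def treeCap (E : Set (ℕ → Bool)) : ℝ≥0∞ := treeCapN 0 E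

/-- `∂T_x`: the boundary points extending the vertex `x`. -/
def bdSub (x : List Bool) : Set (ℕ → Bool) := { ζ | pre ζ x.length = x }

/-- The tree capacity `cap^{T_x}(F)` computed in the subtree `T_x` rooted at `x`:
the sums `Iφ` are taken over the prefixes from `x` onward, and the energy is summed
over the vertices of `T_x` (the binary strings having `x` as a prefix). -/
noncomputable def treeCapAt (x : List Bool) (F : Set (ℕ → Bool)) : ℝ≥0∞ :=
  sInf { c | ∃ φ : List Bool → ℝ≥0,
    (∀ ζ ∈ F, 1 ≤ ∑' k : ℕ, (φ (pre ζ (x.length + k)) : ℝ≥0∞)) ∧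
    c = ∑' y : { l : List Bool // x <+: l }, (φ y : ℝ≥0∞) ^ 2 }

lemma length_pre (ζ : ℕ → Bool) (k : ℕ) : (pre ζ k).length = k := by
  simp [pre]

lemma pre_add (ζ : ℕ → Bool) (m n : ℕ) :
    pre ζ (m + n) = pre ζ m ++ List.ofFn (fun i : Fin n => ζ (m + i)) := by
  simp [pre, List.ofFn_add]

lemma pre_prefix_pre (ζ : ℕ → Bool) {m n : ℕ} (h : m ≤ n) : pre ζ m <+: pre ζ n := by
  obtain ⟨k, rfl⟩ := Nat.exists_eq_add_of_le h
  rw [pre_add]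
  exact List.prefix_append _ _

lemma mem_bdSub_append_singleton {ζ : ℕ → Bool} {x : List Bool} {b : Bool} :
    ζ ∈ bdSub (x ++ [b]) ↔ ζ ∈ bdSub x ∧ ζ x.length = b := by
  simp only [bdSub, Set.mem_ofPred_eq, List.length_append, List.length_singleton, pre_add]
  constructor
  · intro h
    have := List.append_inj h (by simp [length_pre])
    simpa using this
  · rintro ⟨h, rfl⟩
    simp [h]

lemma prefix_pre_of_mem_bdSub {ζ : ℕ → Bool} {x : List Bool} (h : ζ ∈ bdSub x) (k : ℕ) :
    x <+: pre ζ (x.length + k) := by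
  conv_lhs => rw [← (h : pre ζ x.length = x)]
  exact pre_prefix_pre ζ (Nat.le_add_right _ _)

lemma setOf_prefix_eq (x : List Bool) :
    {l | x <+: l} = insert x ({l | x ++ [false] <+: l} ∪ {l | x ++ [true] <+: l}) := by
  ext l
  simp only [Set.mem_ofPred_eq, Set.mem_insert_iff, Set.mem_union]
  constructor
  · rintro ⟨_ | ⟨b, t⟩, rfl⟩
    · simp
    · cases b <;> simp
  · rintro (rfl | h | h)
    · exact List.prefix_refl _
    all_goals exact (List.prefix_append _ _).trans h

lemma not_prefix_self_append_singleton (x : List Bool) (b : Bool) : ¬ x ++ [b] <+: x := by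
  intro h
  simpa using h.length_le

lemma not_prefix_of_prefix_sibling {x l : List Bool} {b : Bool} (h : x ++ [b] <+: l) :
    ¬ x ++ [!b] <+: l := by
  rintro ⟨t', rfl⟩
  obtain ⟨t, ht⟩ := h
  simp at ht

/-- `Iφ(ζ)` computed in the subtree `T_x`. -/
def pathSumAt (x : List Bool) (φ : List Bool → ℝ≥0) (ζ : ℕ → Bool) : ℝ≥0∞ :=
  ∑' k : ℕ, (φ (pre ζ (x.length + k)) : ℝ≥0∞)

def IsAdmissibleAt (x : List Bool) (F : Set (ℕ → Bool)) (φ : List Bool → ℝ≥0) : Prop :=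
  ∀ ζ ∈ F, 1 ≤ pathSumAt x φ ζ

def energyAt (x : List Bool) (φ : List Bool → ℝ≥0) : ℝ≥0∞ :=
  ∑' y : {l : List Bool // x <+: l}, (φ y : ℝ≥0∞) ^ 2

lemma treeCapAt_eq_iInf (x : List Bool) (F : Set (ℕ → Bool)) :
    treeCapAt x F = ⨅ φ : {φ // IsAdmissibleAt x F φ}, energyAt x φ := by
  rw [treeCapAt, ← sInf_range]
  congr 1
  ext c
  simp [IsAdmissibleAt, pathSumAt, energyAt, eq_comm]

section Subtree

variable {x : List Bool} {φ ψ : List Bool → ℝ≥0}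

lemma pathSumAt_eq_add {ζ : ℕ → Bool} (hζ : ζ ∈ bdSub x) (b : Bool) :
    pathSumAt x φ ζ = φ x + pathSumAt (x ++ [b]) φ ζ := by
  have hx : pre ζ (x.length + 0) = x := by rw [add_zero]; exact hζ
  rw [pathSumAt, pathSumAt, tsum_eq_zero_add' ENNReal.summable, hx]
  congr 2 with k
  simp only [List.length_append, List.length_singleton]
  ring_nf

lemma pathSumAt_congr {ζ : ℕ → Bool} (hζ : ζ ∈ bdSub x) (h : ∀ l, x <+: l → φ l = ψ l) :
    pathSumAt x φ ζ = pathSumAt x ψ ζ :=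
  tsum_congr fun k => by rw [h _ (prefix_pre_of_mem_bdSub hζ k)]

lemma pathSumAt_const_mul (c : ℝ≥0) (ζ : ℕ → Bool) :
    pathSumAt x (fun l => c * φ l) ζ = c * pathSumAt x φ ζ := by
  simp only [pathSumAt, ENNReal.coe_mul, ENNReal.tsum_mul_left]

lemma energyAt_congr (h : ∀ l, x <+: l → φ l = ψ l) : energyAt x φ = energyAt x ψ :=
  tsum_congr fun l => by rw [h l l.2]

lemma energyAt_const_mul (c : ℝ≥0) :
    energyAt x (fun l => c * φ l) = (c : ℝ≥0∞) ^ 2 * energyAt x φ := by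
  simp only [energyAt, ENNReal.coe_mul, mul_pow, ENNReal.tsum_mul_left]

lemma energyAt_eq_sq_add (x : List Bool) (φ : List Bool → ℝ≥0) :
    energyAt x φ = (φ x : ℝ≥0∞) ^ 2 + energyAt (x ++ [false]) φ + energyAt (x ++ [true]) φ := by
  have hdisj : Disjoint {l | x ++ [false] <+: l} {l | x ++ [true] <+: l} :=
    Set.disjoint_left.mpr fun _ h => not_prefix_of_prefix_sibling (b := false) h
  have hx : x ∉ {l | x ++ [false] <+: l} ∪ {l | x ++ [true] <+: l} := by
    rintro (h | h) <;> exact not_prefix_self_append_singleton _ _ h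
  change ∑' l : ({l | x <+: l} : Set _), (φ l : ℝ≥0∞) ^ 2 = _
  rw [setOf_prefix_eq, Set.insert_eq,
    ENNReal.summable.tsum_union_disjoint (f := fun l => (φ l : ℝ≥0∞) ^ 2)
      (Set.disjoint_singleton_left.mpr hx) ENNReal.summable,
    ENNReal.summable.tsum_union_disjoint (f := fun l => (φ l : ℝ≥0∞) ^ 2) hdisj ENNReal.summable,
    tsum_singleton x (fun l => (φ l : ℝ≥0∞) ^ 2), add_assoc]
  rfl

end Subtree

lemma isAdmissibleAt_single {x : List Bool} {F : Set (ℕ → Bool)} (hF : F ⊆ bdSub x) :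
    IsAdmissibleAt x F (Pi.single x 1) := fun ζ hζ => by
  rw [pathSumAt_eq_add (hF hζ) false]
  simp

lemma treeCapAt_le_one {x : List Bool} {F : Set (ℕ → Bool)} (hF : F ⊆ bdSub x) :
    treeCapAt x F ≤ 1 := by
  have hchild (b : Bool) : energyAt (x ++ [b]) (Pi.single x 1) = 0 := by
    rw [energyAt_congr (ψ := 0)]
    · simp [energyAt]
    · rintro l hl
      have : l ≠ x := by rintro rfl; exact not_prefix_self_append_singleton _ _ hl
      simp [this]
  rw [treeCapAt_eq_iInf]
  refine iInf_le_of_le ⟨_, isAdmissibleAt_single hF⟩ ?_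
  simp [energyAt_eq_sq_add x, hchild]

lemma sq_mul_treeCapAt_le {x : List Bool} {F : Set (ℕ → Bool)} {φ : List Bool → ℝ≥0} {a : ℝ≥0}
    (h : ∀ ζ ∈ F, a ≤ pathSumAt x φ ζ) : (a : ℝ≥0∞) ^ 2 * treeCapAt x F ≤ energyAt x φ := by
  rcases eq_or_ne a 0 with rfl | ha
  · simp
  have ha' : (a : ℝ≥0∞) ≠ 0 := by simpa
  have hadm : IsAdmissibleAt x F (fun l => a⁻¹ * φ l) := fun ζ hζ => by
    rw [pathSumAt_const_mul, ENNReal.coe_inv ha]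
    calc 1 = (a : ℝ≥0∞)⁻¹ * a := (ENNReal.inv_mul_cancel ha' ENNReal.coe_ne_top).symm
      _ ≤ (a : ℝ≥0∞)⁻¹ * pathSumAt x φ ζ := mul_le_mul_right (h ζ hζ) _
  rw [treeCapAt_eq_iInf]
  calc (a : ℝ≥0∞) ^ 2 * ⨅ ψ : {ψ // IsAdmissibleAt x F ψ}, energyAt x ψ
      ≤ (a : ℝ≥0∞) ^ 2 * energyAt x (fun l => a⁻¹ * φ l) :=
        mul_le_mul_right (iInf_le (fun ψ : {ψ // IsAdmissibleAt x F ψ} => energyAt x ψ) ⟨_, hadm⟩) _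
    _ = energyAt x φ := by
      rw [energyAt_const_mul, ← mul_assoc, ← mul_pow, ENNReal.coe_inv ha,
        ENNReal.mul_inv_cancel ha' ENNReal.coe_ne_top, one_pow, one_mul]

/-- `c(y) = cap^{T_y}(E ∩ ∂T_y)`. -/
def subtreeCap (E : Set (ℕ → Bool)) (y : List Bool) : ℝ≥0∞ := treeCapAt y (E ∩ bdSub y)

section Recursion

variable {E : Set (ℕ → Bool)} {x : List Bool}

lemma subtreeCap_le_one (E : Set (ℕ → Bool)) (y : List Bool) : subtreeCap E y ≤ 1 :=
  treeCapAt_le_one Set.inter_subset_right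

instance (E : Set (ℕ → Bool)) (y : List Bool) :
    Nonempty {φ // IsAdmissibleAt y (E ∩ bdSub y) φ} :=
  ⟨⟨_, isAdmissibleAt_single Set.inter_subset_right⟩⟩

lemma sq_add_sq_mul_le_energyAt {φ : List Bool → ℝ≥0} (hφ : IsAdmissibleAt x (E ∩ bdSub x) φ) :
    (φ x : ℝ≥0∞) ^ 2 + ((1 - φ x : ℝ≥0) : ℝ≥0∞) ^ 2
      * (subtreeCap E (x ++ [false]) + subtreeCap E (x ++ [true])) ≤ energyAt x φ := by
  have hchild (b : Bool) :
      ((1 - φ x : ℝ≥0) : ℝ≥0∞) ^ 2 * subtreeCap E (x ++ [b]) ≤ energyAt (x ++ [b]) φ := by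
    refine sq_mul_treeCapAt_le fun ζ ⟨hζE, hζb⟩ => ?_
    have hζx := (mem_bdSub_append_singleton.mp hζb).1
    have := hφ ζ ⟨hζE, hζx⟩
    rw [pathSumAt_eq_add hζx b] at this
    rw [ENNReal.coe_sub, ENNReal.coe_one]
    exact tsub_le_iff_left.mpr this
  rw [energyAt_eq_sq_add, mul_add, add_assoc]
  exact add_le_add_right (add_le_add (hchild false) (hchild true)) _

def glue (x : List Bool) (t : ℝ≥0) (ψ : Bool → List Bool → ℝ≥0) (l : List Bool) : ℝ≥0 :=
  if l = x then t else if x ++ [false] <+: l then (1 - t) * ψ false l else (1 - t) * ψ true l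

lemma glue_self (t : ℝ≥0) (ψ : Bool → List Bool → ℝ≥0) : glue x t ψ x = t := if_pos rfl

lemma glue_of_prefix {t : ℝ≥0} {ψ : Bool → List Bool → ℝ≥0} {b : Bool} {l : List Bool}
    (h : x ++ [b] <+: l) : glue x t ψ l = (1 - t) * ψ b l := by
  have hne : l ≠ x := by rintro rfl; exact not_prefix_self_append_singleton _ _ h
  cases b
  · simp [glue, hne, h]
  · have hf : ¬ x ++ [false] <+: l := not_prefix_of_prefix_sibling h
    simp [glue, hne, hf]

lemma isAdmissibleAt_glue (t : ℝ≥0) {ψ : Bool → List Bool → ℝ≥0}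
    (hψ : ∀ b, IsAdmissibleAt (x ++ [b]) (E ∩ bdSub (x ++ [b])) (ψ b)) :
    IsAdmissibleAt x (E ∩ bdSub x) (glue x t ψ) := by
  rintro ζ ⟨hζE, hζx⟩
  have hζb : ζ ∈ bdSub (x ++ [ζ x.length]) := mem_bdSub_append_singleton.mpr ⟨hζx, rfl⟩
  rw [pathSumAt_eq_add hζx (ζ x.length), glue_self,
    pathSumAt_congr hζb fun l hl => glue_of_prefix hl, pathSumAt_const_mul]
  calc (1 : ℝ≥0∞) ≤ ((t + (1 - t) : ℝ≥0) : ℝ≥0∞) := by exact_mod_cast le_add_tsub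
    _ = t + (1 - t : ℝ≥0) * 1 := by push_cast; ring
    _ ≤ _ := add_le_add_right (mul_le_mul_right (hψ _ ζ ⟨hζE, hζb⟩) _) _

lemma energyAt_glue (t : ℝ≥0) (ψ : Bool → List Bool → ℝ≥0) :
    energyAt x (glue x t ψ) = (t : ℝ≥0∞) ^ 2 + ((1 - t : ℝ≥0) : ℝ≥0∞) ^ 2
      * (energyAt (x ++ [false]) (ψ false) + energyAt (x ++ [true]) (ψ true)) := by
  rw [energyAt_eq_sq_add, glue_self, energyAt_congr fun l hl => glue_of_prefix hl,
    energyAt_congr (x := x ++ [true]) fun l hl => glue_of_prefix hl,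
    energyAt_const_mul, energyAt_const_mul, mul_add, add_assoc]

lemma subtreeCap_le_sq_add_sq_mul (t : ℝ≥0) :
    subtreeCap E x ≤ (t : ℝ≥0∞) ^ 2 + ((1 - t : ℝ≥0) : ℝ≥0∞) ^ 2
      * (subtreeCap E (x ++ [false]) + subtreeCap E (x ++ [true])) := by
  have hu : ((1 - t : ℝ≥0) : ℝ≥0∞) ^ 2 ≠ ⊤ := ENNReal.pow_ne_top ENNReal.coe_ne_top
  simp only [subtreeCap, treeCapAt_eq_iInf, mul_add, ENNReal.mul_iInf fun h => absurd h hu,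
    ENNReal.iInf_add, ENNReal.add_iInf]
  refine le_iInf₂ fun ψt ψf => ?_
  let ψ : Bool → List Bool → ℝ≥0 := fun b => b.rec ψf ψt
  have hψ (b : Bool) : IsAdmissibleAt (x ++ [b]) (E ∩ bdSub (x ++ [b])) (ψ b) := by
    cases b
    exacts [ψf.2, ψt.2]
  refine iInf_le_of_le ⟨_, isAdmissibleAt_glue t hψ⟩ ?_
  rw [energyAt_glue, mul_add]

end Recursion

lemma subtreeCap_eq_iInf (E : Set (ℕ → Bool)) (x : List Bool) :
    subtreeCap E x = ⨅ t : ℝ≥0, (t : ℝ≥0∞) ^ 2 + ((1 - t : ℝ≥0) : ℝ≥0∞) ^ 2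
      * (subtreeCap E (x ++ [false]) + subtreeCap E (x ++ [true])) := by
  refine le_antisymm (le_iInf subtreeCap_le_sq_add_sq_mul) ?_
  change _ ≤ treeCapAt x (E ∩ bdSub x)
  rw [treeCapAt_eq_iInf]
  exact le_iInf fun φ => iInf_le_of_le (φ.1 x) (sq_add_sq_mul_le_energyAt φ.2)

lemma div_one_add_le_sq_add_sq_mul (s t : ℝ≥0) : s / (1 + s) ≤ t ^ 2 + (1 - t) ^ 2 * s := by
  rcases le_total t 1 with ht | ht
  · rw [div_le_iff₀ (by positivity), ← NNReal.coe_le_coe]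
    push_cast [ht]
    nlinarith [sq_nonneg ((t : ℝ) * (1 + s) - s)]
  · rw [tsub_eq_zero_of_le ht]
    calc s / (1 + s) ≤ 1 := div_le_one_of_le₀ le_add_self zero_le
      _ ≤ t ^ 2 + 0 ^ 2 * s := by simpa using one_le_pow₀ ht

lemma sq_add_sq_mul_div_one_add (s : ℝ≥0) :
    (s / (1 + s)) ^ 2 + (1 - s / (1 + s)) ^ 2 * s = s / (1 + s) := by
  have hle : s / (1 + s) ≤ 1 := div_le_one_of_le₀ le_add_self zero_le
  rw [← NNReal.coe_inj]
  push_cast [hle]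
  field_simp
  ring

lemma iInf_sq_add_sq_mul (s : ℝ≥0∞) (hs : s ≠ ⊤) :
    ⨅ t : ℝ≥0, (t : ℝ≥0∞) ^ 2 + ((1 - t : ℝ≥0) : ℝ≥0∞) ^ 2 * s = s / (1 + s) := by
  lift s to ℝ≥0 using hs
  have hcast (t : ℝ≥0) : (t : ℝ≥0∞) ^ 2 + ((1 - t : ℝ≥0) : ℝ≥0∞) ^ 2 * s
      = ((t ^ 2 + (1 - t) ^ 2 * s : ℝ≥0) : ℝ≥0∞) := by push_cast; rfl
  rw [show (s : ℝ≥0∞) / (1 + s) = ((s / (1 + s) : ℝ≥0) : ℝ≥0∞) by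
      rw [ENNReal.coe_div (by positivity)]; push_cast; rfl]
  simp_rw [hcast]
  rw [← ENNReal.coe_iInf, ENNReal.coe_inj]
  refine le_antisymm ?_ (le_ciInf (div_one_add_le_sq_add_sq_mul s))
  exact (ciInf_le (OrderBot.bddBelow _) (s / (1 + s))).trans (sq_add_sq_mul_div_one_add s).le

theorem tree_capacity_recursion_general (E : Set (ℕ → Bool))
    (x : List Bool) :
    treeCapAt x (E ∩ bdSub x)
      = (treeCapAt (x ++ [false]) (E ∩ bdSub (x ++ [false]))
          + treeCapAt (x ++ [true]) (E ∩ bdSub (x ++ [true])))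
        / (1 + treeCapAt (x ++ [false]) (E ∩ bdSub (x ++ [false]))
          + treeCapAt (x ++ [true]) (E ∩ bdSub (x ++ [true]))) := by
  have hs : subtreeCap E (x ++ [false]) + subtreeCap E (x ++ [true]) ≠ ⊤ :=
    ENNReal.add_ne_top.mpr ⟨ne_top_of_le_ne_top ENNReal.one_ne_top (subtreeCap_le_one _ _),
      ne_top_of_le_ne_top ENNReal.one_ne_top (subtreeCap_le_one _ _)⟩
  rw [add_assoc]
  exact (subtreeCap_eq_iInf E x).trans (iInf_sq_add_sq_mul _ hs)

/-- Let `E ⊆ ∂T` be closed and write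
`c(y) = cap^{T_y}(E ∩ ∂T_y)`. Then for every `x ∈ T`,
`c(x) = (c(x₊) + c(x₋)) / (1 + c(x₊) + c(x₋))`, where `x₊ = x ++ [false]` and
`x₋ = x ++ [true]` are the two children of `x`. -/
theorem tree_capacity_recursion (E : Set (ℕ → Bool)) (hE : IsClosed E)
    (x : List Bool) :
    treeCapAt x (E ∩ bdSub x)
      = (treeCapAt (x ++ [false]) (E ∩ bdSub (x ++ [false]))
          + treeCapAt (x ++ [true]) (E ∩ bdSub (x ++ [true])))
        / (1 + treeCapAt (x ++ [false]) (E ∩ bdSub (x ++ [false]))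
          + treeCapAt (x ++ [true]) (E ∩ bdSub (x ++ [true]))) :=
  tree_capacity_recursion_general E x
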